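/- arXiv:2312.06812 — 2 statements merged into one kernel-verified Lean document; each statement's English description precedes it below -/
import Mathlib

section
/- Let A = [[E,F],[F,G]] be a 2×2 complex symmetric matrix whose entrywise real part Re(A) is positive definite. Then for every s ∈ ℂ with Re(s) > 1 the family (Q_A(j)^{−s})_{j∈ℤ²∖{0}} is absolutely summable, and the Epstein zeta function Z_A(s) = ∑_{j∈ℤ², j≠0} Q_A(j)^{−s} is an analytic (complex differentiable) function of s on the half-plane {s ∈ ℂ : Re(s) > 1}. -/
open Complex MeasureTheory Filter

noncomputable section

/-- Quadratic form `Q_A(v) = E v₁² + 2F v₁v₂ + G v₂²` of a 2×2 complex matrix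
`A = [[E,F],[F,G]]`, evaluated at a real vector `v = (v₁, v₂)`. -/
def quadForm (A : Matrix (Fin 2) (Fin 2) ℂ) (v : ℝ × ℝ) : ℂ :=
  A 0 0 * (v.1 : ℂ) ^ 2 + 2 * A 0 1 * (v.1 : ℂ) * (v.2 : ℂ) + A 1 1 * (v.2 : ℂ) ^ 2

/-- Quadratic form evaluated at a lattice point `j ∈ ℤ²`. -/
def quadFormZ (A : Matrix (Fin 2) (Fin 2) ℂ) (j : ℤ × ℤ) : ℂ :=
  quadForm A ((j.1 : ℝ), (j.2 : ℝ))

/-- Entrywise real part of a complex matrix. -/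
def reMat (A : Matrix (Fin 2) (Fin 2) ℂ) : Matrix (Fin 2) (Fin 2) ℝ :=
  A.map Complex.re

/-! By compactness of the unit circle, positive definiteness of `Re A` and homogeneity give
`c ‖v‖² ≤ Re Q_A(v)` for some `c > 0`. As `|arg Q_A(j)| ≤ π / 2`, this bounds `‖Q_A(j) ^ (-s)‖`
by `c ^ (-Re s) e ^ (π |Im s| / 2) ‖j‖ ^ (-2 Re s)`, which is summable over `ℤ²` for `Re s > 1`,
locally uniformly in `s`; the Weierstrass M-test gives summability and holomorphy. -/

theorem exists_mul_norm_sq_le_of_homogeneous {E : Type*} [NormedAddCommGroup E]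
    [NormedSpace ℝ E] [FiniteDimensional ℝ E] {f : E → ℝ} (hf : Continuous f)
    (hhom : ∀ (t : ℝ) (v : E), f (t • v) = t ^ 2 * f v) (hpos : ∀ v ≠ 0, 0 < f v) :
    ∃ c > 0, ∀ v, c * ‖v‖ ^ 2 ≤ f v := by
  have hf0 : f 0 = 0 := by simpa using hhom 0 0
  rcases subsingleton_or_nontrivial E with hE | hE
  · exact ⟨1, one_pos, fun v => by simp [Subsingleton.elim v 0, hf0]⟩
  obtain ⟨v₀, hv₀, hmin⟩ := (isCompact_sphere (0 : E) 1).exists_isMinOn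
    (NormedSpace.sphere_nonempty.2 zero_le_one) hf.continuousOn
  refine ⟨f v₀, hpos v₀ (ne_zero_of_mem_unit_sphere ⟨v₀, hv₀⟩), fun v => ?_⟩
  rcases eq_or_ne v 0 with rfl | hv
  · simp [hf0]
  have hunit : ‖v‖⁻¹ • v ∈ Metric.sphere (0 : E) 1 := by simp [norm_smul, hv]
  calc f v₀ * ‖v‖ ^ 2 ≤ f (‖v‖⁻¹ • v) * ‖v‖ ^ 2 := by gcongr; exact hmin hunit
    _ = f v := by rw [hhom]; field_simp

namespace Complex

theorem norm_cpow_neg_le_of_re_pos {z : ℂ} (hz : 0 < z.re) (s : ℂ) :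
    ‖z ^ (-s)‖ ≤ ‖z‖ ^ (-s.re) * Real.exp (Real.pi / 2 * |s.im|) := by
  have harg : |arg z| ≤ Real.pi / 2 := abs_arg_le_pi_div_two_iff.2 hz.le
  calc ‖z ^ (-s)‖ ≤ ‖z‖ ^ (-s.re) / Real.exp (arg z * -s.im) := norm_cpow_le z (-s)
    _ = ‖z‖ ^ (-s.re) * Real.exp (arg z * s.im) := by
      rw [div_eq_mul_inv, ← Real.exp_neg, mul_neg, neg_neg]
    _ ≤ ‖z‖ ^ (-s.re) * Real.exp (Real.pi / 2 * |s.im|) := by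
      have : arg z * s.im ≤ Real.pi / 2 * |s.im| :=
        calc arg z * s.im ≤ |arg z| * |s.im| := by rw [← abs_mul]; exact le_abs_self _
          _ ≤ Real.pi / 2 * |s.im| := by gcongr
      gcongr

theorem norm_cpow_neg_le_of_mul_sq_le_re {z : ℂ} {c x a b M : ℝ} (hc : 0 < c) (hc1 : c ≤ 1)
    (hx : 1 ≤ x) (hz : c * x ^ 2 ≤ z.re) {s : ℂ} (ha : 0 ≤ a) (has : a ≤ s.re)
    (hsb : s.re ≤ b) (hM : |s.im| ≤ M) :
    ‖z ^ (-s)‖ ≤ c ^ (-b) * Real.exp (Real.pi / 2 * M) * x ^ (-(2 * a)) := by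
  have hcx : 0 < c * x ^ 2 := by positivity
  calc ‖z ^ (-s)‖ ≤ ‖z‖ ^ (-s.re) * Real.exp (Real.pi / 2 * |s.im|) :=
        norm_cpow_neg_le_of_re_pos (hcx.trans_le hz) s
    _ ≤ (c * x ^ 2) ^ (-s.re) * Real.exp (Real.pi / 2 * M) := by
        gcongr ?_ * Real.exp ?_
        · exact Real.rpow_le_rpow_of_nonpos hcx (hz.trans (re_le_norm z)) (by linarith)
        · gcongr
    _ = c ^ (-s.re) * x ^ (-(2 * s.re)) * Real.exp (Real.pi / 2 * M) := by
        rw [Real.mul_rpow hc.le (by positivity), ← Real.rpow_natCast, ← Real.rpow_mul (by linarith)]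
        push_cast; ring_nf
    _ ≤ c ^ (-b) * x ^ (-(2 * a)) * Real.exp (Real.pi / 2 * M) := by
        gcongr ?_ * ?_ * _
        · exact Real.rpow_le_rpow_of_exponent_ge hc hc1 (by linarith)
        · exact Real.rpow_le_rpow_of_exponent_le hx (by linarith)
    _ = c ^ (-b) * Real.exp (Real.pi / 2 * M) * x ^ (-(2 * a)) := by ring

end Complex

namespace Int

theorem norm_cast_real_prod (j : ℤ × ℤ) : ‖((j.1 : ℝ), (j.2 : ℝ))‖ = ‖j‖ := by
  simp [Prod.norm_def, Int.norm_eq_abs]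

theorem one_le_norm_prod {j : ℤ × ℤ} (hj : j ≠ 0) : 1 ≤ ‖j‖ := by
  rcases j with ⟨m, n⟩
  obtain hm | hn : m ≠ 0 ∨ n ≠ 0 := by rwa [ne_eq, Prod.mk_eq_zero, not_and_or] at hj
  · exact le_max_of_le_left (by rw [Int.norm_eq_abs]; exact_mod_cast one_le_abs hm)
  · exact le_max_of_le_right (by rw [Int.norm_eq_abs]; exact_mod_cast one_le_abs hn)

theorem summable_norm_prod_rpow_neg {k : ℝ} (hk : 2 < k) :
    Summable fun j : ℤ × ℤ => ‖j‖ ^ (-k) := by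
  refine ((EisensteinSeries.summable_one_div_norm_rpow hk).comp_injective
    (finTwoArrowEquiv ℤ).symm.injective).congr fun j => ?_
  simp [EisensteinSeries.norm_eq_max_natAbs, Prod.norm_def, norm_eq_abs]

end Int

section QuadForm

open scoped Matrix

variable {A : Matrix (Fin 2) (Fin 2) ℂ}

theorem quadForm_smul (t : ℝ) (v : ℝ × ℝ) :
    quadForm A (t • v) = (t : ℂ) ^ 2 * quadForm A v := by
  simp only [quadForm, Prod.smul_fst, Prod.smul_snd, smul_eq_mul, ofReal_mul]
  ring

theorem re_quadForm_eq_dotProduct_mulVec (hsym : A.IsSymm) (v : ℝ × ℝ) :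
    (quadForm A v).re = ![v.1, v.2] ⬝ᵥ (reMat A *ᵥ ![v.1, v.2]) := by
  have hA : A 1 0 = A 0 1 := hsym.apply 0 1
  simp [quadForm, reMat, dotProduct, Matrix.mulVec, Fin.sum_univ_two, hA, ← ofReal_pow]
  ring

theorem re_quadForm_pos (hsym : A.IsSymm) (hpd : (reMat A).PosDef) {v : ℝ × ℝ} (hv : v ≠ 0) :
    0 < (quadForm A v).re := by
  rw [re_quadForm_eq_dotProduct_mulVec hsym]
  refine hpd.dotProduct_mulVec_pos fun h => hv (Prod.ext ?_ ?_)
  exacts [congrFun h 0, congrFun h 1]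

theorem exists_mul_norm_sq_le_re_quadForm (hsym : A.IsSymm) (hpd : (reMat A).PosDef) :
    ∃ c, 0 < c ∧ c ≤ 1 ∧ ∀ v, c * ‖v‖ ^ 2 ≤ (quadForm A v).re := by
  obtain ⟨c, hc, hle⟩ := exists_mul_norm_sq_le_of_homogeneous (f := fun v => (quadForm A v).re)
    (by unfold quadForm; fun_prop) (fun t v => by simp [quadForm_smul, ← ofReal_pow])
    fun v hv => re_quadForm_pos hsym hpd hv
  refine ⟨min c 1, by positivity, min_le_right c 1, fun v => ?_⟩
  exact (mul_le_mul_of_nonneg_right (min_le_left c 1) (by positivity)).trans (hle v)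

theorem quadFormZ_ne_zero (hsym : A.IsSymm) (hpd : (reMat A).PosDef) {j : ℤ × ℤ} (hj : j ≠ 0) :
    quadFormZ A j ≠ 0 := by
  refine fun h => (re_quadForm_pos hsym hpd (v := ((j.1 : ℝ), (j.2 : ℝ))) ?_).ne' ?_
  · simpa [Prod.ext_iff] using hj
  · simpa [quadFormZ] using congrArg re h

theorem exists_summable_bound_norm_quadFormZ_cpow (hsym : A.IsSymm) (hpd : (reMat A).PosDef)
    {a : ℝ} (ha : 1 < a) (b M : ℝ) :
    ∃ u : {j : ℤ × ℤ // j ≠ 0} → ℝ, Summable u ∧ ∀ j (s : ℂ), a ≤ s.re → s.re ≤ b →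
      |s.im| ≤ M → ‖quadFormZ A j.1 ^ (-s)‖ ≤ u j := by
  obtain ⟨c, hc, hc1, hle⟩ := exists_mul_norm_sq_le_re_quadForm hsym hpd
  refine ⟨fun j => c ^ (-b) * Real.exp (Real.pi / 2 * M) * ‖j.1‖ ^ (-(2 * a)),
    ((Int.summable_norm_prod_rpow_neg (by linarith)).subtype _).mul_left _,
    fun j s has hsb hM => ?_⟩
  refine norm_cpow_neg_le_of_mul_sq_le_re hc hc1 (Int.one_le_norm_prod j.2) ?_ (by linarith)
    has hsb hM
  have hj := hle ((j.1.1 : ℝ), (j.1.2 : ℝ))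
  rwa [Int.norm_cast_real_prod] at hj

end QuadForm

/-- For a complex symmetric `2×2` matrix `A` with positive definite real part, the Epstein
zeta series `Z_A(s) = ∑_{j ∈ ℤ², j ≠ 0} Q_A(j)^{-s}` is absolutely summable for `Re s > 1`,
and defines an analytic (complex differentiable) function of `s` on `{Re s > 1}`. -/
theorem epstein_zeta_summable_and_analytic
    (A : Matrix (Fin 2) (Fin 2) ℂ) (hsym : A.IsSymm) (hpd : (reMat A).PosDef) :
    (∀ s : ℂ, 1 < s.re →
      Summable (fun j : {j : ℤ × ℤ // j ≠ 0} => ‖quadFormZ A j.1 ^ (-s)‖)) ∧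
    DifferentiableOn ℂ
      (fun s : ℂ => ∑' j : {j : ℤ × ℤ // j ≠ 0}, quadFormZ A j.1 ^ (-s))
      {s : ℂ | 1 < s.re} := by
  refine ⟨fun s hs => ?_, differentiableOn_of_locally_differentiableOn fun s₀ hs₀ => ?_⟩
  · obtain ⟨u, hu, hbound⟩ := exists_summable_bound_norm_quadFormZ_cpow hsym hpd hs s.re |s.im|
    exact hu.of_nonneg_of_le (fun _ => norm_nonneg _) fun j => hbound j s le_rfl le_rfl le_rfl
  obtain ⟨r, hr, hr₁⟩ : ∃ r > 0, 1 < s₀.re - r :=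
    ⟨(s₀.re - 1) / 2, by simp at hs₀; linarith, by simp at hs₀; linarith⟩
  obtain ⟨u, hu, hbound⟩ :=
    exists_summable_bound_norm_quadFormZ_cpow hsym hpd hr₁ (s₀.re + r) (|s₀.im| + r)
  refine ⟨Metric.ball s₀ r, Metric.isOpen_ball, Metric.mem_ball_self hr,
    (differentiableOn_tsum_of_summable_norm hu (fun j => ?_) Metric.isOpen_ball
      fun j s hs => ?_).mono Set.inter_subset_right⟩
  · exact (differentiable_neg.const_cpow
      (Or.inl (quadFormZ_ne_zero hsym hpd j.2))).differentiableOn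
  · rw [Metric.mem_ball, dist_eq] at hs
    have hre := abs_lt.1 ((abs_re_le_norm (s - s₀)).trans_lt hs)
    have him := (abs_im_le_norm (s - s₀)).trans_lt hs
    rw [sub_re] at hre
    rw [sub_im] at him
    refine hbound j s (by linarith) (by linarith) ?_
    linarith [abs_sub_abs_le_abs_sub s.im s₀.im]
end
end

section
/- Let A be an invertible 2×2 complex symmetric matrix such that both Re(A) and Re(A^{-1}) are positive definite. Then for every real t > 0, ∑_{j∈ℤ²} e^{−π t Q_A(j)} = (1/(t √(det A))) ∑_{j∈ℤ²} e^{−π Q_{A^{-1}}(j)/t}, where √(det A) is the principal square root, and both series converge absolutely. -/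
open Complex MeasureTheory Real

noncomputable section

/-!
Completing the square in the second variable and applying one-dimensional Poisson summation
(`Complex.tsum_exp_neg_quadratic`) turns the theta series of `A = !![E, F; F, G]` into
`G^(-1/2)` times the theta series of `partialDual A = !![1/G, -iF/G; -iF/G, det A / G]`, whose
real part is again positive definite. Doing this twice gives the theta series of `A⁻¹`, with
factor `(G · det A / G)^(-1/2) = (det A)^(-1/2)`. The parameter `t` is absorbed into `t • A`.
-/

lemma mul_cpow_of_arg_add_mem_Ioc {z w : ℂ} (hz : z ≠ 0) (hw : w ≠ 0)
    (h : z.arg + w.arg ∈ Set.Ioc (-π) π) (s : ℂ) : (z * w) ^ s = z ^ s * w ^ s := by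
  rw [cpow_def_of_ne_zero (mul_ne_zero hz hw), log_mul hz hw h, add_mul, Complex.exp_add,
    cpow_def_of_ne_zero hz, cpow_def_of_ne_zero hw]

lemma mul_cpow_of_re_pos {z w : ℂ} (hz : 0 < z.re) (hw : 0 < w.re) (s : ℂ) :
    (z * w) ^ s = z ^ s * w ^ s := by
  have hz' := abs_lt.1 (abs_arg_lt_pi_div_two_iff.2 (Or.inl hz))
  have hw' := abs_lt.1 (abs_arg_lt_pi_div_two_iff.2 (Or.inl hw))
  refine mul_cpow_of_arg_add_mem_Ioc (ne_zero_of_re_pos hz) (ne_zero_of_re_pos hw)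
    ⟨?_, ?_⟩ s <;> linarith [pi_pos]

lemma ofReal_sq_mul_cpow_half {t : ℝ} (ht : 0 < t) {z : ℂ} (hz : z ≠ 0) :
    ((t : ℂ) ^ 2 * z) ^ (1 / 2 : ℂ) = t * z ^ (1 / 2 : ℂ) := by
  have ht2 : (t : ℂ) ^ 2 ≠ 0 := pow_ne_zero 2 (ofReal_ne_zero.2 ht.ne')
  have harg : ((t : ℂ) ^ 2).arg + z.arg ∈ Set.Ioc (-π) π := by
    rw [← ofReal_pow, arg_ofReal_of_nonneg (by positivity), zero_add]
    exact ⟨neg_pi_lt_arg z, arg_le_pi z⟩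
  rw [mul_cpow_of_arg_add_mem_Ioc ht2 hz harg, one_div, sq_cpow_two_inv (by rwa [ofReal_re])]

lemma quadFormZ_eq (A : Matrix (Fin 2) (Fin 2) ℂ) (j : ℤ × ℤ) :
    quadFormZ A j = A 0 0 * j.1 ^ 2 + 2 * A 0 1 * j.1 * j.2 + A 1 1 * j.2 ^ 2 := by
  simp only [quadFormZ, quadForm, ofReal_intCast]

lemma re_quadFormZ (A : Matrix (Fin 2) (Fin 2) ℂ) (j : ℤ × ℤ) :
    (quadFormZ A j).re =
      (A 0 0).re * j.1 ^ 2 + 2 * (A 0 1).re * j.1 * j.2 + (A 1 1).re * j.2 ^ 2 := by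
  simp [quadFormZ_eq, pow_two]

lemma quadFormZ_smul (c : ℂ) (A : Matrix (Fin 2) (Fin 2) ℂ) (j : ℤ × ℤ) :
    quadFormZ (c • A) j = c * quadFormZ A j := by
  simp only [quadFormZ_eq, Matrix.smul_apply, smul_eq_mul]
  ring

/-- Positive definiteness of `Re Q_A`; like `quadForm`, it does not see `A 1 0`. -/
def RePosDef (A : Matrix (Fin 2) (Fin 2) ℂ) : Prop :=
  0 < (A 0 0).re ∧ (A 0 1).re ^ 2 < (A 0 0).re * (A 1 1).re

/-- Poisson summation in the second variable turns the theta series of `A` into that of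
`partialDual A`, the dual variable coming first. -/
def partialDual (A : Matrix (Fin 2) (Fin 2) ℂ) : Matrix (Fin 2) (Fin 2) ℂ :=
  !![1 / A 1 1, -I * A 0 1 / A 1 1; -I * A 0 1 / A 1 1, (A 0 0 * A 1 1 - A 0 1 ^ 2) / A 1 1]

namespace RePosDef

variable {A : Matrix (Fin 2) (Fin 2) ℂ}

lemma re_one_one_pos (hA : RePosDef A) : 0 < (A 1 1).re := by
  obtain ⟨h00, hdisc⟩ := hA
  nlinarith [sq_nonneg (A 0 1).re]

lemma of_posDef_reMat (hA : (reMat A).PosDef) : RePosDef A := by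
  have hsymm : (A 1 0).re = (A 0 1).re := hA.isHermitian.apply 0 1
  have hdet := hA.det_pos
  rw [Matrix.det_fin_two] at hdet
  simp only [reMat, Matrix.map_apply, hsymm] at hdet
  exact ⟨hA.diag_pos, by nlinarith⟩

lemma ofReal_smul (hA : RePosDef A) {t : ℝ} (ht : 0 < t) : RePosDef ((t : ℂ) • A) := by
  obtain ⟨h00, hdisc⟩ := hA
  simp only [RePosDef, Matrix.smul_apply, smul_eq_mul, re_ofReal_mul]
  exact ⟨mul_pos ht h00, by nlinarith [mul_pos ht ht]⟩

lemma partialDual (hA : RePosDef A) : RePosDef (partialDual A) := by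
  set E := A 0 0
  set F := A 0 1
  set G := A 1 1
  have hG : 0 < G.re := hA.re_one_one_pos
  have hnG : 0 < normSq G := normSq_pos.2 (ne_zero_of_re_pos hG)
  -- `Re Q` of the dual matrix has discriminant that of `Re Q_A` divided by `|G|²`
  have hdisc_eq : ((1 / G).re * ((E * G - F ^ 2) / G).re - (-I * F / G).re ^ 2) * normSq G =
      E.re * G.re - F.re ^ 2 := by
    simp only [div_re, one_re, one_im, mul_re, mul_im, neg_re, neg_im, I_re, I_im,
      sub_re, sub_im, pow_two, normSq_apply]
    field_simp
    ring
  refine ⟨?_, ?_⟩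
  · simpa [_root_.partialDual, inv_re] using div_pos hG hnG
  · have hdisc_pos : 0 < (1 / G).re * ((E * G - F ^ 2) / G).re - (-I * F / G).re ^ 2 :=
      pos_of_mul_pos_left (hdisc_eq ▸ sub_pos.2 hA.2) hnG.le
    simp only [_root_.partialDual, Matrix.of_apply, Matrix.cons_val', Matrix.cons_val_zero,
      Matrix.cons_val_one, Matrix.empty_val', Matrix.cons_val_fin_one]
    linarith

end RePosDef

lemma det_eq_of_isSymm {A : Matrix (Fin 2) (Fin 2) ℂ} (hsym : A.IsSymm) :
    A.det = A 0 0 * A 1 1 - A 0 1 ^ 2 := by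
  rw [Matrix.det_fin_two, hsym.apply 0 1]
  ring

lemma partialDual_one_one {A : Matrix (Fin 2) (Fin 2) ℂ} (hsym : A.IsSymm) :
    partialDual A 1 1 = A.det / A 1 1 := by
  rw [det_eq_of_isSymm hsym]
  rfl

lemma RePosDef.det_ne_zero {A : Matrix (Fin 2) (Fin 2) ℂ} (hsym : A.IsSymm) (hA : RePosDef A) :
    A.det ≠ 0 := by
  have h := ne_zero_of_re_pos hA.partialDual.re_one_one_pos
  rw [partialDual_one_one hsym] at h
  exact (div_ne_zero_iff.1 h).1

lemma partialDual_partialDual {A : Matrix (Fin 2) (Fin 2) ℂ} (hsym : A.IsSymm)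
    (hA : RePosDef A) :
    partialDual (partialDual A) = A⁻¹ := by
  have hG := ne_zero_of_re_pos hA.re_one_one_pos
  have hD := hA.det_ne_zero hsym
  rw [Matrix.inv_def, Matrix.adjugate_fin_two, Ring.inverse_eq_inv', hsym.apply 0 1]
  rw [det_eq_of_isSymm hsym] at hD ⊢
  ext i j
  fin_cases i <;> fin_cases j <;> simp [partialDual] <;> field_simp <;> ring_nf <;> simp [I_sq]

lemma summable_exp_neg_mul_int_sq {m : ℝ} (hm : 0 < m) :
    Summable fun n : ℤ => rexp (-m * n ^ 2) := by
  refine (summable_pow_mul_jacobiTheta₂_term_bound 0 (div_pos hm pi_pos) 0).congr fun n => ?_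
  field_simp
  simp

lemma summable_exp_neg_quadratic_int_prod {a b c : ℝ} (ha : 0 < a) (hdisc : b ^ 2 < a * c) :
    Summable fun j : ℤ × ℤ => rexp (-(a * j.1 ^ 2 + 2 * b * j.1 * j.2 + c * j.2 ^ 2)) := by
  have hc : 0 < c := by nlinarith [sq_nonneg b]
  set m := (a * c - b ^ 2) / (a + c)
  have hm : 0 < m := div_pos (by linarith) (by linarith)
  have hbound (x y : ℝ) : m * (x ^ 2 + y ^ 2) ≤ a * x ^ 2 + 2 * b * x * y + c * y ^ 2 := by
    rw [div_mul_eq_mul_div, div_le_iff₀ (by linarith)]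
    nlinarith [sq_nonneg (a * x + b * y), sq_nonneg (b * x + c * y)]
  refine ((summable_exp_neg_mul_int_sq hm).mul_of_nonneg (summable_exp_neg_mul_int_sq hm)
    (fun _ => (exp_pos _).le) (fun _ => (exp_pos _).le)).of_nonneg_of_le
    (fun _ => (exp_pos _).le) fun j => ?_
  rw [← Real.exp_add, Real.exp_le_exp]
  linarith [hbound j.1 j.2]

lemma RePosDef.summable_norm_cexp {A : Matrix (Fin 2) (Fin 2) ℂ} (hA : RePosDef A) :
    Summable fun j : ℤ × ℤ => ‖cexp (-π * quadFormZ A j)‖ := by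
  obtain ⟨h00, hdisc⟩ := hA
  have hdisc' : (π * (A 0 1).re) ^ 2 < π * (A 0 0).re * (π * (A 1 1).re) := by
    have := mul_lt_mul_of_pos_left hdisc (pow_pos pi_pos 2)
    linarith
  refine (summable_exp_neg_quadratic_int_prod (mul_pos pi_pos h00) hdisc').congr fun j => ?_
  rw [norm_exp, ← ofReal_neg, re_ofReal_mul, re_quadFormZ]
  ring_nf

lemma tsum_cexp_neg_pi_quadFormZ_snd {A : Matrix (Fin 2) (Fin 2) ℂ} (hG : 0 < (A 1 1).re)
    (x : ℤ) :
    ∑' y : ℤ, cexp (-π * quadFormZ A (x, y)) =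
      1 / A 1 1 ^ (1 / 2 : ℂ) * ∑' k : ℤ, cexp (-π * quadFormZ (partialDual A) (k, x)) := by
  have hG0 : A 1 1 ≠ 0 := ne_zero_of_re_pos hG
  have hsplit (y : ℤ) : cexp (-π * quadFormZ A (x, y)) =
      cexp (-π * A 1 1 * y ^ 2 + 2 * π * (-A 0 1 * x) * y) * cexp (-π * A 0 0 * x ^ 2) := by
    rw [← Complex.exp_add, quadFormZ_eq]
    ring_nf
  have hcomplete (k : ℤ) :
      cexp (-π / A 1 1 * (k + I * (-A 0 1 * x)) ^ 2) * cexp (-π * A 0 0 * x ^ 2) =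
        cexp (-π * quadFormZ (partialDual A) (k, x)) := by
    rw [← Complex.exp_add, quadFormZ_eq]
    congr 1
    simp only [partialDual, Matrix.of_apply, Matrix.cons_val', Matrix.cons_val_zero,
      Matrix.cons_val_one, Matrix.empty_val', Matrix.cons_val_fin_one]
    field_simp
    ring_nf
    rw [I_sq]
    ring
  rw [tsum_congr hsplit, tsum_mul_right, Complex.tsum_exp_neg_quadratic hG, mul_assoc,
    ← tsum_mul_right, tsum_congr hcomplete]

lemma tsum_cexp_neg_pi_quadFormZ_eq_partialDual {A : Matrix (Fin 2) (Fin 2) ℂ}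
    (hA : RePosDef A) :
    ∑' j : ℤ × ℤ, cexp (-π * quadFormZ A j) =
      1 / A 1 1 ^ (1 / 2 : ℂ) * ∑' j : ℤ × ℤ, cexp (-π * quadFormZ (partialDual A) j) := by
  have hdual := hA.partialDual.summable_norm_cexp.of_norm
  rw [hA.summable_norm_cexp.of_norm.tsum_prod,
    tsum_congr (tsum_cexp_neg_pi_quadFormZ_snd hA.re_one_one_pos), tsum_mul_left,
    Summable.tsum_comm (f := fun k x => cexp (-π * quadFormZ (partialDual A) (k, x))) hdual,
    ← hdual.tsum_prod]

lemma RePosDef.inv {A : Matrix (Fin 2) (Fin 2) ℂ} (hsym : A.IsSymm) (hA : RePosDef A) :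
    RePosDef A⁻¹ :=
  partialDual_partialDual hsym hA ▸ hA.partialDual.partialDual

theorem tsum_cexp_neg_pi_quadFormZ_eq_inv {A : Matrix (Fin 2) (Fin 2) ℂ} (hsym : A.IsSymm)
    (hA : RePosDef A) :
    ∑' j : ℤ × ℤ, cexp (-π * quadFormZ A j) =
      1 / A.det ^ (1 / 2 : ℂ) * ∑' j : ℤ × ℤ, cexp (-π * quadFormZ A⁻¹ j) := by
  have hdet : A 1 1 * partialDual A 1 1 = A.det := by
    rw [partialDual_one_one hsym]
    field_simp [ne_zero_of_re_pos hA.re_one_one_pos]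
  rw [tsum_cexp_neg_pi_quadFormZ_eq_partialDual hA,
    tsum_cexp_neg_pi_quadFormZ_eq_partialDual hA.partialDual, partialDual_partialDual hsym hA,
    ← hdet, mul_cpow_of_re_pos hA.re_one_one_pos hA.partialDual.re_one_one_pos]
  ring

theorem theta_transformation_general
    (A : Matrix (Fin 2) (Fin 2) ℂ) (hsym : A.IsSymm)
    (hpd : (reMat A).PosDef) :
    ∀ t : ℝ, 0 < t →
      Summable (fun j : ℤ × ℤ => ‖Complex.exp (-(π : ℂ) * t * quadFormZ A j)‖) ∧
      Summable (fun j : ℤ × ℤ => ‖Complex.exp (-(π : ℂ) * quadFormZ A⁻¹ j / t)‖) ∧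
      (∑' j : ℤ × ℤ, Complex.exp (-(π : ℂ) * t * quadFormZ A j)) =
        1 / ((t : ℂ) * A.det ^ ((1 : ℂ) / 2)) *
          ∑' j : ℤ × ℤ, Complex.exp (-(π : ℂ) * quadFormZ A⁻¹ j / t) := by
  intro t ht
  have hA := RePosDef.of_posDef_reMat hpd
  have htA := hA.ofReal_smul ht
  have ht0 : (t : ℂ) ≠ 0 := ofReal_ne_zero.2 ht.ne'
  have hinv : ((t : ℂ) • A)⁻¹ = (t : ℂ)⁻¹ • A⁻¹ :=
    Matrix.inv_eq_left_inv <| by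
      rw [smul_mul_smul_comm, inv_mul_cancel₀ ht0, Matrix.nonsing_inv_mul _
        (hA.det_ne_zero hsym).isUnit, one_smul]
  have hQ (j : ℤ × ℤ) : -(π : ℂ) * t * quadFormZ A j = -π * quadFormZ ((t : ℂ) • A) j := by
    rw [quadFormZ_smul]
    ring
  have hQinv (j : ℤ × ℤ) :
      -(π : ℂ) * quadFormZ A⁻¹ j / t = -π * quadFormZ ((t : ℂ) • A)⁻¹ j := by
    rw [hinv, quadFormZ_smul]
    field_simp
  simp only [hQ, hQinv]
  refine ⟨htA.summable_norm_cexp, (htA.inv (hsym.smul _)).summable_norm_cexp, ?_⟩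
  rw [tsum_cexp_neg_pi_quadFormZ_eq_inv (hsym.smul _) htA, Matrix.det_smul, Fintype.card_fin,
    ofReal_sq_mul_cpow_half ht (hA.det_ne_zero hsym)]

/-- Theta transformation (Poisson summation) for an invertible complex symmetric `2×2`
matrix `A` with `Re A` and `Re A⁻¹` positive definite: for every `t > 0`,
`∑_{j∈ℤ²} e^{-π t Q_A(j)} = (1/(t √(det A))) ∑_{j∈ℤ²} e^{-π Q_{A⁻¹}(j)/t}`,
both series being absolutely convergent. -/
theorem theta_transformation
    (A : Matrix (Fin 2) (Fin 2) ℂ) (hsym : A.IsSymm) (hdet : A.det ≠ 0)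
    (hpd : (reMat A).PosDef) (hpdinv : (reMat A⁻¹).PosDef) :
    ∀ t : ℝ, 0 < t →
      Summable (fun j : ℤ × ℤ => ‖Complex.exp (-(π : ℂ) * t * quadFormZ A j)‖) ∧
      Summable (fun j : ℤ × ℤ => ‖Complex.exp (-(π : ℂ) * quadFormZ A⁻¹ j / t)‖) ∧
      (∑' j : ℤ × ℤ, Complex.exp (-(π : ℂ) * t * quadFormZ A j)) =
        1 / ((t : ℂ) * A.det ^ ((1 : ℂ) / 2)) *
          ∑' j : ℤ × ℤ, Complex.exp (-(π : ℂ) * quadFormZ A⁻¹ j / t) :=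
  theta_transformation_general A hsym hpd
end
end
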